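/- arXiv:1607.08641 — 8 statements merged into one kernel-verified Lean document; each statement's English description precedes it below -/
import Mathlib

section
/- Let H be a non-trivial hypergraph on n vertices and let k be the size of the largest edge in H. Then the infection number of H is at most n - k + 1. -/
/-- A (finite) hypergraph: a vertex set and a set of edges, each edge a subset
of the vertex set. -/
structure FinHypergraph (α : Type*) [DecidableEq α] where
  verts : Finset α
  edges : Finset (Finset α)
  edge_sub : ∀ e ∈ edges, e ⊆ verts

namespace FinHypergraph

variable {α : Type*} [DecidableEq α]

/-- The `m`-infection closure of an initially infected set `W`: a set `A` of
infected vertices with `m ≤ |A|` can infect an edge `E ⊇ A` provided every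
vertex `u` outside `E` such that `A ∪ {u}` is contained in some edge is
already infected; then every vertex of `E` becomes infected. -/
inductive InfectedFromM (H : FinHypergraph α) (m : ℕ) (W : Finset α) : α → Prop
  | init {v : α} (hv : v ∈ W) : InfectedFromM H m W v
  | spread {A E : Finset α} {v : α}
      (hcard : m ≤ A.card) (hAE : A ⊆ E) (hE : E ∈ H.edges)
      (hAinf : ∀ a ∈ A, InfectedFromM H m W a)
      (hblock : ∀ u ∈ H.verts, u ∉ E → (∃ E' ∈ H.edges, A ∪ {u} ⊆ E') →
        InfectedFromM H m W u)
      (hv : v ∈ E) : InfectedFromM H m W v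

/-- `W` is an `m`-infection set if starting from `W` every vertex gets infected. -/
def IsInfectionSetM (H : FinHypergraph α) (m : ℕ) (W : Finset α) : Prop :=
  W ⊆ H.verts ∧ ∀ v ∈ H.verts, InfectedFromM H m W v

/-- The `m`-infection number: minimum size of an `m`-infection set. -/
noncomputable def infectionNumberM (H : FinHypergraph α) (m : ℕ) : ℕ :=
  sInf {n | ∃ W : Finset α, IsInfectionSetM H m W ∧ W.card = n}

/-- Ordinary infection (`m = 1`, i.e. the infecting set is nonempty). -/
def InfectedFrom (H : FinHypergraph α) : Finset α → α → Prop := InfectedFromM H 1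

def IsInfectionSet (H : FinHypergraph α) : Finset α → Prop := IsInfectionSetM H 1

noncomputable def infectionNumber (H : FinHypergraph α) : ℕ := infectionNumberM H 1

/-- The degree of a vertex: the number of edges containing it. -/
def degree (H : FinHypergraph α) (v : α) : ℕ := (H.edges.filter (fun e => v ∈ e)).card

/-- Two vertices are adjacent if some edge contains both. -/
def Adj (H : FinHypergraph α) (u v : α) : Prop := ∃ e ∈ H.edges, u ∈ e ∧ v ∈ e

/-- A hypergraph is connected if any two vertices are joined by a chain of
adjacencies. -/
def Connected (H : FinHypergraph α) : Prop :=
  ∀ u ∈ H.verts, ∀ v ∈ H.verts, Relation.ReflTransGen H.Adj u v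

/-- A hypergraph is reduced if no edge is contained in another edge. -/
def Reduced (H : FinHypergraph α) : Prop :=
  ∀ e ∈ H.edges, ∀ f ∈ H.edges, e ⊆ f → e = f

open Classical in
/-- The connected component of a vertex. -/
noncomputable def component (H : FinHypergraph α) (v : α) : Finset α :=
  H.verts.filter (fun u => Relation.ReflTransGen H.Adj v u)

/-- The sub-hypergraph induced by a vertex set `S`. -/
def restrict (H : FinHypergraph α) (S : Finset α) : FinHypergraph α where
  verts := H.verts ∩ S
  edges := H.edges.filter (fun e => e ⊆ S)
  edge_sub := fun e he => by
    simp only [Finset.mem_filter] at he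
    exact Finset.subset_inter (H.edge_sub e he.1) he.2

end FinHypergraph

namespace FinHypergraph

variable {α : Type*} [DecidableEq α] {H : FinHypergraph α} {m : ℕ}

theorem infectionNumberM_le_card {W : Finset α} (hW : H.IsInfectionSetM m W) :
    H.infectionNumberM m ≤ W.card :=
  Nat.sInf_le ⟨W, hW, rfl⟩

/-- Everything outside `e` is infected from the start, so `A` meets no uninfected vertex outside
`e` and infects `e`. -/
theorem isInfectionSetM_union_sdiff {A e : Finset α} (he : e ∈ H.edges) (hAe : A ⊆ e)
    (hm : m ≤ A.card) : H.IsInfectionSetM m (A ∪ (H.verts \ e)) := by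
  have houtside : ∀ u ∈ H.verts, u ∉ e → H.InfectedFromM m (A ∪ (H.verts \ e)) u :=
    fun u hu hue => .init (Finset.mem_union_right _ (Finset.mem_sdiff.mpr ⟨hu, hue⟩))
  refine ⟨Finset.union_subset (hAe.trans (H.edge_sub e he)) Finset.sdiff_subset, fun v hv => ?_⟩
  by_cases hve : v ∈ e
  · exact .spread hm hAe he (fun a ha => .init (Finset.mem_union_left _ ha))
      (fun u hu hue _ => houtside u hu hue) hve
  · exact houtside v hv hve

theorem infectionNumberM_le_card_sub_card_add {A e : Finset α} (he : e ∈ H.edges)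
    (hAe : A ⊆ e) (hm : m ≤ A.card) :
    H.infectionNumberM m ≤ H.verts.card - e.card + A.card := by
  calc H.infectionNumberM m ≤ (A ∪ (H.verts \ e)).card :=
        infectionNumberM_le_card (isInfectionSetM_union_sdiff he hAe hm)
    _ ≤ A.card + (H.verts \ e).card := Finset.card_union_le _ _
    _ = H.verts.card - e.card + A.card := by
        rw [Finset.card_sdiff_of_subset (H.edge_sub e he), add_comm]

end FinHypergraph

theorem infectionNumber_le_card_sub_maxEdge_add_one_general
    {α : Type*} [DecidableEq α] (H : FinHypergraph α) (n k : ℕ)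
    (hn : H.verts.card = n)
    (hedge_ne : ∀ e ∈ H.edges, e.Nonempty)
    (hmax : ∃ e ∈ H.edges, e.card = k) :
    H.infectionNumber ≤ n - k + 1 := by
  obtain ⟨e, he, rfl⟩ := hmax
  obtain ⟨x, hx⟩ := hedge_ne e he
  have hbound := H.infectionNumberM_le_card_sub_card_add (m := 1) he
    (Finset.singleton_subset_iff.mpr hx) (Finset.card_singleton x).ge
  rw [Finset.card_singleton, hn] at hbound
  exact hbound

/-- For a non-trivial hypergraph `H` on `n` vertices whose largest
edge has size `k`, the infection number is at most `n - k + 1`. -/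
theorem infectionNumber_le_card_sub_maxEdge_add_one
    {α : Type*} [DecidableEq α] (H : FinHypergraph α) (n k : ℕ)
    (hn : H.verts.card = n)
    (hnontriv : H.edges.Nonempty)
    (hedge_ne : ∀ e ∈ H.edges, e.Nonempty)
    (hmax : ∃ e ∈ H.edges, e.card = k)
    (hmax' : ∀ e ∈ H.edges, e.card ≤ k) :
    H.infectionNumber ≤ n - k + 1 :=
  infectionNumber_le_card_sub_maxEdge_add_one_general H n k hn hedge_ne hmax
end

section
/- Let H be a hypergraph and let E1, E2 be edges of H with E1 a proper subset of E2. Then I(H) = I(H \ E1), where H \ E1 is the hypergraph obtained from H by deleting the edge E1 (keeping all vertices). Moreover, any infection set for H is an infection set for H \ E1 and vice versa. -/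
/-- The hypergraph obtained by deleting the edge `E` (keeping all vertices). -/
def FinHypergraph.delEdge {α : Type*} [DecidableEq α] (H : FinHypergraph α) (E : Finset α) :
    FinHypergraph α :=
  ⟨H.verts, H.edges.erase E, fun e he => H.edge_sub e (Finset.mem_of_mem_erase he)⟩

/-!
Infection only depends on the vertex set and on which sets are covered by some edge, since an
edge `E` can always be replaced by an edge containing it: the infected vertices `A ⊆ E` still lie
in it, it infects at least `E`, and fewer outside vertices need to be infected beforehand.
Deleting an edge that lies in another edge changes neither the vertices nor the covered sets.
-/

namespace FinHypergraph

variable {α : Type*} [DecidableEq α]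

def EdgesCoveredBy (H H' : FinHypergraph α) : Prop :=
  ∀ e ∈ H.edges, ∃ e' ∈ H'.edges, e ⊆ e'

section EdgesCoveredBy

variable {H H' : FinHypergraph α}

theorem EdgesCoveredBy.exists_superset (h : EdgesCoveredBy H H') {S : Finset α}
    (hS : ∃ e ∈ H.edges, S ⊆ e) : ∃ e' ∈ H'.edges, S ⊆ e' := by
  obtain ⟨e, he, hSe⟩ := hS
  obtain ⟨e', he', hee'⟩ := h e he
  exact ⟨e', he', hSe.trans hee'⟩

theorem InfectedFromM.of_edgesCoveredBy {m : ℕ} {W : Finset α} {v : α}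
    (hV : H'.verts ⊆ H.verts) (h : EdgesCoveredBy H H') (h' : EdgesCoveredBy H' H)
    (hv : InfectedFromM H m W v) : InfectedFromM H' m W v := by
  induction hv with
  | init hv => exact .init hv
  | @spread A E v hcard hAE hE _ _ hvE ihA ihblock =>
    obtain ⟨E', hE', hEE'⟩ := h E hE
    refine .spread hcard (hAE.trans hEE') hE' ihA ?_ (hEE' hvE)
    intro u hu huE' hcov
    exact ihblock u (hV hu) (fun huE => huE' (hEE' huE)) (h'.exists_superset hcov)

theorem infectedFromM_iff_of_edgesCoveredBy {m : ℕ} {W : Finset α} {v : α}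
    (hV : H.verts = H'.verts) (h : EdgesCoveredBy H H') (h' : EdgesCoveredBy H' H) :
    InfectedFromM H m W v ↔ InfectedFromM H' m W v :=
  ⟨.of_edgesCoveredBy hV.ge h h', .of_edgesCoveredBy hV.le h' h⟩

theorem isInfectionSetM_iff_of_edgesCoveredBy {m : ℕ} {W : Finset α}
    (hV : H.verts = H'.verts) (h : EdgesCoveredBy H H') (h' : EdgesCoveredBy H' H) :
    IsInfectionSetM H m W ↔ IsInfectionSetM H' m W := by
  simp only [IsInfectionSetM, hV, infectedFromM_iff_of_edgesCoveredBy hV h h']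

theorem infectionNumberM_eq_of_edgesCoveredBy {m : ℕ}
    (hV : H.verts = H'.verts) (h : EdgesCoveredBy H H') (h' : EdgesCoveredBy H' H) :
    infectionNumberM H m = infectionNumberM H' m := by
  simp only [infectionNumberM, isInfectionSetM_iff_of_edgesCoveredBy hV h h']

end EdgesCoveredBy

theorem delEdge_edgesCoveredBy (H : FinHypergraph α) (E : Finset α) :
    EdgesCoveredBy (H.delEdge E) H :=
  fun e he => ⟨e, Finset.mem_of_mem_erase he, subset_rfl⟩

theorem edgesCoveredBy_delEdge_of_ssubset {H : FinHypergraph α} {E1 E2 : Finset α}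
    (h2 : E2 ∈ H.edges) (hss : E1 ⊂ E2) : EdgesCoveredBy H (H.delEdge E1) := by
  intro e he
  by_cases heE1 : e = E1
  · exact ⟨E2, Finset.mem_erase.mpr ⟨hss.ne', h2⟩, heE1 ▸ hss.subset⟩
  · exact ⟨e, Finset.mem_erase.mpr ⟨heE1, he⟩, subset_rfl⟩

end FinHypergraph

theorem infectionNumber_delEdge_of_subedge_general
    {α : Type*} [DecidableEq α] (H : FinHypergraph α) (E1 E2 : Finset α)
    (h2 : E2 ∈ H.edges) (hss : E1 ⊂ E2) :
    H.infectionNumber = (H.delEdge E1).infectionNumber ∧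
      ∀ W : Finset α, H.IsInfectionSet W ↔ (H.delEdge E1).IsInfectionSet W := by
  have hV : H.verts = (H.delEdge E1).verts := rfl
  have hcov := FinHypergraph.edgesCoveredBy_delEdge_of_ssubset h2 hss
  have hcov' := H.delEdge_edgesCoveredBy E1
  exact ⟨FinHypergraph.infectionNumberM_eq_of_edgesCoveredBy hV hcov hcov',
    fun _ => FinHypergraph.isInfectionSetM_iff_of_edgesCoveredBy hV hcov hcov'⟩

/-- Deleting an edge that is properly contained in another edge
does not change the infection number, and the infection sets of the two
hypergraphs coincide. -/
theorem infectionNumber_delEdge_of_subedge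
    {α : Type*} [DecidableEq α] (H : FinHypergraph α) (E1 E2 : Finset α)
    (h1 : E1 ∈ H.edges) (h2 : E2 ∈ H.edges) (hss : E1 ⊂ E2) :
    H.infectionNumber = (H.delEdge E1).infectionNumber ∧
      ∀ W : Finset α, H.IsInfectionSet W ↔ (H.delEdge E1).IsInfectionSet W :=
  infectionNumber_delEdge_of_subedge_general H E1 E2 h2 hss
end

section
/- For integers 1 ≤ k ≤ n, the infection number of the complete k-uniform hypergraph on n vertices equals n - k + 1. -/
/-- The complete `k`-uniform hypergraph on `n` vertices. -/
def completeUniform (n k : ℕ) : FinHypergraph (Fin n) :=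
  ⟨Finset.univ, Finset.univ.powersetCard k, fun e _ => Finset.subset_univ e⟩

namespace FinHypergraph

variable {α : Type*} [DecidableEq α]

open Finset

theorem infectionNumber_le {H : FinHypergraph α} {W : Finset α} (hW : H.IsInfectionSet W) :
    H.infectionNumber ≤ #W :=
  Nat.sInf_le ⟨W, hW, rfl⟩

theorem le_infectionNumber {H : FinHypergraph α} {b : ℕ} (hne : ∃ W, H.IsInfectionSet W)
    (hb : ∀ W, H.IsInfectionSet W → b ≤ #W) : b ≤ H.infectionNumber := by
  obtain ⟨W, hW⟩ := hne
  exact le_csInf ⟨#W, W, hW, rfl⟩ fun _ ⟨W', hW', hcard⟩ => hcard ▸ hb W' hW'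

theorem isInfectionSet_insert_sdiff {H : FinHypergraph α} {E : Finset α} (hE : E ∈ H.edges)
    {a : α} (ha : a ∈ E) : H.IsInfectionSet (insert a (H.verts \ E)) := by
  refine ⟨insert_subset (H.edge_sub E hE ha) sdiff_subset, fun v hv => ?_⟩
  by_cases hvE : v ∈ E
  · refine .spread (A := {a}) (by simp) (singleton_subset_iff.2 ha) hE ?_ ?_ hvE
    · simp only [mem_singleton, forall_eq]
      exact .init (mem_insert_self a _)
    · exact fun u hu huE _ => .init (mem_insert_of_mem (mem_sdiff.2 ⟨hu, huE⟩))
  · exact .init (mem_insert_of_mem (mem_sdiff.2 ⟨hv, hvE⟩))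

theorem infectionNumber_le_card_verts_sub_card_add_one {H : FinHypergraph α} {E : Finset α}
    (hE : E ∈ H.edges) (hne : E.Nonempty) : H.infectionNumber ≤ #H.verts - #E + 1 := by
  obtain ⟨a, ha⟩ := hne
  calc H.infectionNumber ≤ #(insert a (H.verts \ E)) :=
        infectionNumber_le (isInfectionSet_insert_sdiff hE ha)
    _ ≤ #(H.verts \ E) + 1 := card_insert_le _ _
    _ = #H.verts - #E + 1 := by rw [card_sdiff_of_subset (H.edge_sub E hE)]

end FinHypergraph

open Finset

theorem completeUniform_mem_edges {n k : ℕ} {E : Finset (Fin n)} :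
    E ∈ (completeUniform n k).edges ↔ #E = k := by
  simp [completeUniform]

theorem completeUniform_exists_edge_superset {n k : ℕ} (hkn : k ≤ n) {s : Finset (Fin n)}
    (hs : #s ≤ k) : ∃ E ∈ (completeUniform n k).edges, s ⊆ E := by
  obtain ⟨E, hsE, -, hE⟩ := exists_subsuperset_card_eq (subset_univ s) hs (by simpa using hkn)
  exact ⟨E, completeUniform_mem_edges.2 hE, hsE⟩

/-- If `A ⊊ E` could infect `E`, all `n - k` vertices outside `E` would already be infected, and
so would the vertices of `A` inside `E`: more than `n - k` infected vertices in all. -/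
theorem completeUniform_infectedFrom_mem {n k : ℕ} {W : Finset (Fin n)} (hW : #W + k ≤ n)
    {v : Fin n} (hv : (completeUniform n k).InfectedFrom W v) : v ∈ W := by
  induction hv with
  | init hv => exact hv
  | @spread A E v hA hAE hE _ _ hvE ihA ihBlock =>
    rw [completeUniform_mem_edges] at hE
    obtain rfl | hAE := hAE.eq_or_ssubset
    · exact ihA v hvE
    · exfalso
      have hcompl : Eᶜ ⊆ W := fun u hu => by
        rw [mem_compl] at hu
        refine ihBlock u (mem_univ u) hu (completeUniform_exists_edge_superset (by omega) ?_)
        have := card_lt_card hAE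
        calc #(A ∪ {u}) ≤ #A + 1 := card_union_le _ _
          _ ≤ k := by omega
      have hdisj : Disjoint A Eᶜ := disjoint_compl_right.mono_left hAE.subset
      have := card_le_card (union_subset ihA hcompl)
      rw [card_union_of_disjoint hdisj, card_compl, Fintype.card_fin, hE] at this
      omega

theorem completeUniform_lt_card_add_of_isInfectionSet {n k : ℕ} (hk : 1 ≤ k)
    {W : Finset (Fin n)} (hW : (completeUniform n k).IsInfectionSet W) : n < #W + k := by
  by_contra! hsmall
  have huniv : univ ⊆ W := fun v _ =>
    completeUniform_infectedFrom_mem hsmall (hW.2 v (mem_univ v))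
  have := card_le_card huniv
  rw [card_univ, Fintype.card_fin] at this
  omega

/-- For `1 ≤ k ≤ n`, the infection number of the complete
`k`-uniform hypergraph on `n` vertices is `n - k + 1`. -/
theorem infectionNumber_completeUniform (n k : ℕ) (h1 : 1 ≤ k) (h2 : k ≤ n) :
    (completeUniform n k).infectionNumber = n - k + 1 := by
  obtain ⟨E, hE, -⟩ := completeUniform_exists_edge_superset h2 (s := ∅) (by simp)
  have hEcard : #E = k := completeUniform_mem_edges.1 hE
  obtain ⟨a, ha⟩ : E.Nonempty := card_pos.1 (by omega)
  apply le_antisymm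
  · simpa [completeUniform, hEcard] using
      FinHypergraph.infectionNumber_le_card_verts_sub_card_add_one hE ⟨a, ha⟩
  · refine FinHypergraph.le_infectionNumber
      ⟨_, FinHypergraph.isInfectionSet_insert_sdiff hE ha⟩ fun W hW => ?_
    have := completeUniform_lt_card_add_of_isInfectionSet h1 hW
    omega
end

section
/- Let 2 ≤ k ≤ n and let H be the k-uniform hypergraph on vertex set {1,...,n} whose edges are all sets F ∪ {n} where F is a (k−1)-subset of {1,...,n−1}. If n ≥ 2k−1 then I(H) = n−k; otherwise I(H) = n−k+1. -/
/-- The `k`-uniform hypergraph on `{1, …, n}` whose edges are the sets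
`F ∪ {n}` with `F` a `(k-1)`-subset of `{1, …, n-1}`. -/
def coneHypergraph (n k : ℕ) (hn : 1 ≤ n) : FinHypergraph ℕ where
  verts := Finset.Icc 1 n
  edges := ((Finset.Icc 1 (n - 1)).powersetCard (k - 1)).image (fun F => insert n F)
  edge_sub := by
    intro e he
    simp only [Finset.mem_image, Finset.mem_powersetCard] at he
    obtain ⟨F, ⟨hF, _⟩, rfl⟩ := he
    intro x hx
    rcases Finset.mem_insert.mp hx with rfl | hxF
    · exact Finset.mem_Icc.mpr ⟨hn, le_rfl⟩
    · exact Finset.Icc_subset_Icc_right (Nat.sub_le n 1) (hF hxF)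

/-!
Lower bounds come from sets `S ⊇ W` closed under the infection rule: no legal step infects
a vertex outside `S`. In the cone hypergraph an infecting set `A` inside the edge `{n} ∪ F` is
blocked by every vertex `u ≤ n - 1` outside `F ∪ S` unless `A \ {n} = F`, because `A ∪ {u}`
still fits into an edge. If `|W| + k < n`, then `S = W ∪ {n}` is closed, as counting always
yields a blocker. If `n ≤ 2k - 2` and `|W| ≤ n - k`, then `S = W` is already closed: `A \ {n}`
is too small to fill `F`, and since `A ≠ ∅` the sets `{n} ∪ F` and `W` overlap, which leaves
room for a blocker.

Upper bounds: once `{1, …, n-k}` and one vertex of the top edge `{n-k+1, …, n}` are infected,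
that vertex infects the whole top edge. For `n ≥ 2k - 1` the vertex `n` is infected by
`{1, …, k-1} ⊆ {1, …, n-k}`, which lies in a single edge.
-/

open Finset

namespace FinHypergraph

variable {α : Type*} [DecidableEq α] {H : FinHypergraph α} {m : ℕ} {W : Finset α}

def IsInfectionClosed (H : FinHypergraph α) (m : ℕ) (S : Finset α) : Prop :=
  ∀ ⦃A E : Finset α⦄, m ≤ #A → A ⊆ S → A ⊆ E → E ∈ H.edges →
    (∀ u ∈ H.verts, u ∉ E → (∃ E' ∈ H.edges, A ∪ {u} ⊆ E') → u ∈ S) → E ⊆ S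

theorem InfectedFromM.mem_of_isInfectionClosed {S : Finset α} (hS : H.IsInfectionClosed m S)
    (hWS : W ⊆ S) {v : α} (h : H.InfectedFromM m W v) : v ∈ S := by
  induction h with
  | init hv => exact hWS hv
  | spread hcard hAE hE _ _ hv ihA ihblock => exact hS hcard ihA hAE hE ihblock hv

theorem not_isInfectionSetM_of_isInfectionClosed {S : Finset α}
    (hS : H.IsInfectionClosed m S) (hWS : W ⊆ S) {v : α} (hv : v ∈ H.verts) (hvS : v ∉ S) :
    ¬ H.IsInfectionSetM m W :=
  fun hW => hvS ((hW.2 v hv).mem_of_isInfectionClosed hS hWS)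

theorem InfectedFromM.of_subset_unique_edge {A E : Finset α} (hm : m ≤ #A) (hAE : A ⊆ E)
    (hE : E ∈ H.edges) (hA : ∀ a ∈ A, H.InfectedFromM m W a)
    (hunique : ∀ E' ∈ H.edges, A ⊆ E' → E' ⊆ E) {v : α} (hv : v ∈ E) :
    H.InfectedFromM m W v :=
  .spread hm hAE hE hA (fun u _ huE ⟨E', hE', hsub⟩ =>
    (huE (hunique E' hE' (union_subset_left hsub)
      (hsub (mem_union_right _ (mem_singleton_self u))))).elim) hv

theorem InfectedFromM.of_mem_edge (hm : m ≤ 1) {E : Finset α} (hE : E ∈ H.edges) {a : α}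
    (ha : a ∈ E) (hainf : H.InfectedFromM m W a)
    (hout : ∀ u ∈ H.verts, u ∉ E → H.InfectedFromM m W u) {v : α} (hv : v ∈ E) :
    H.InfectedFromM m W v :=
  .spread (by simpa using hm) (singleton_subset_iff.2 ha) hE (by simpa using hainf)
    (fun u hu huE _ => hout u hu huE) hv

theorem infectionNumberM_eq_card {W₀ : Finset α} (h₀ : H.IsInfectionSetM m W₀)
    (hmin : ∀ W : Finset α, #W < #W₀ → ¬ H.IsInfectionSetM m W) :
    H.infectionNumberM m = #W₀ :=
  le_antisymm (Nat.sInf_le ⟨W₀, h₀, rfl⟩) <| le_csInf ⟨_, W₀, h₀, rfl⟩ <| by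
    rintro _ ⟨W, hW, rfl⟩
    exact not_lt.1 fun hlt => hmin W hlt hW

end FinHypergraph

open FinHypergraph

section coneHypergraph

variable {n k : ℕ} (hn : 1 ≤ n)

@[simp]
theorem coneHypergraph_verts : (coneHypergraph n k hn).verts = Icc 1 n := rfl

theorem mem_coneHypergraph_edges {e : Finset ℕ} :
    e ∈ (coneHypergraph n k hn).edges ↔
      ∃ F ⊆ Icc 1 (n - 1), #F = k - 1 ∧ insert n F = e := by
  simp [coneHypergraph, and_assoc]

theorem insert_mem_coneHypergraph_edges {F : Finset ℕ} (hF : F ⊆ Icc 1 (n - 1))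
    (hFcard : #F = k - 1) : insert n F ∈ (coneHypergraph n k hn).edges :=
  (mem_coneHypergraph_edges hn).2 ⟨F, hF, hFcard, rfl⟩

theorem exists_coneHypergraph_edge_superset (hkn : k ≤ n) {S : Finset ℕ}
    (hS : S ⊆ Icc 1 (n - 1)) (hScard : #S ≤ k - 1) :
    ∃ F, S ⊆ F ∧ insert n F ∈ (coneHypergraph n k hn).edges := by
  obtain ⟨F, hSF, hF, hFcard⟩ := exists_subsuperset_card_eq hS hScard (by simp; omega)
  exact ⟨F, hSF, insert_mem_coneHypergraph_edges hn hF hFcard⟩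

theorem coneHypergraph_isInfectionClosed (hkn : k ≤ n) {m : ℕ} {S : Finset ℕ}
    (h : ∀ A F : Finset ℕ, m ≤ #A → A ⊆ S → F ⊆ Icc 1 (n - 1) → #F = k - 1 →
      A ⊆ insert n F →
        insert n F ⊆ S ∨ #(A.erase n) < k - 1 ∧ #((insert n F ∪ S).erase n) < n - 1) :
    (coneHypergraph n k hn).IsInfectionClosed m S := by
  rintro A E hm hAS hAE hE hblock
  obtain ⟨F, hF, hFcard, rfl⟩ := (mem_coneHypergraph_edges hn).1 hE
  obtain hES | ⟨hAcard, hcount⟩ := h A F hm hAS hF hFcard hAE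
  · exact hES
  obtain ⟨u, hu, huFS⟩ := exists_mem_notMem_of_card_lt_card (t := Icc 1 (n - 1))
    (s := (insert n F ∪ S).erase n) (by rw [Nat.card_Icc]; omega)
  have hun : u ≠ n := by simp at hu; omega
  have huFS' : u ∉ insert n F ∪ S := fun h => huFS (mem_erase.2 ⟨hun, h⟩)
  obtain ⟨F', hsub, hF'⟩ :=
    exists_coneHypergraph_edge_superset hn hkn (S := insert u (A.erase n))
      (insert_subset hu ((subset_insert_iff.1 hAE).trans hF))
      ((card_insert_le _ _).trans (by omega))
  have hAu : A ∪ {u} ⊆ insert n F' :=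
    union_subset (subset_insert_iff.2 ((subset_insert _ _).trans hsub))
      (singleton_subset_iff.2 (mem_insert_of_mem (hsub (mem_insert_self _ _))))
  have huS := hblock u (by simp at hu ⊢; omega) (fun h => huFS' (mem_union_left _ h))
    ⟨_, hF', hAu⟩
  exact (huFS' (mem_union_right _ huS)).elim

theorem coneHypergraph_not_isInfectionSetM_of_card_add_lt (hk : 1 ≤ k) {m : ℕ}
    {W : Finset ℕ} (hW : #W + k < n) : ¬ (coneHypergraph n k hn).IsInfectionSetM m W := by
  have hclosed : (coneHypergraph n k hn).IsInfectionClosed m (insert n W) := by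
    refine coneHypergraph_isInfectionClosed hn (by omega) fun A F _ hAS _ hFcard hAF => ?_
    by_cases hAF' : A.erase n = F
    · exact .inl (hAF' ▸ insert_subset_insert n (subset_insert_iff.1 hAS))
    have hAcard := card_lt_card (ssubset_of_subset_of_ne (subset_insert_iff.1 hAF) hAF')
    have hsub : (insert n F ∪ insert n W).erase n ⊆ F ∪ W := by
      intro x; simp only [mem_erase, mem_union, mem_insert]; tauto
    have := (card_le_card hsub).trans (card_union_le F W)
    exact .inr ⟨by omega, by omega⟩
  obtain ⟨v, hv, hvS⟩ := exists_mem_notMem_of_card_lt_card (t := Icc 1 n) (s := insert n W)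
    ((card_insert_le _ _).trans_lt (by simp; omega))
  exact not_isInfectionSetM_of_isInfectionClosed hclosed (subset_insert _ _) hv hvS

theorem coneHypergraph_not_isInfectionSetM_of_card_add_le {m : ℕ} (hm : 1 ≤ m)
    (hn2k : n + 2 ≤ 2 * k) {W : Finset ℕ} (hW : #W + k ≤ n) :
    ¬ (coneHypergraph n k hn).IsInfectionSetM m W := by
  have hclosed : (coneHypergraph n k hn).IsInfectionClosed m W := by
    refine coneHypergraph_isInfectionClosed hn (by omega) fun A F hmA hAW _ hFcard hAF => ?_
    obtain ⟨a, ha⟩ := card_pos.1 (hm.trans hmA)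
    have hinter : 1 ≤ #(insert n F ∩ W) := card_pos.2 ⟨a, mem_inter.2 ⟨hAF ha, hAW ha⟩⟩
    have hunion := card_union_add_card_inter (insert n F) W
    have hinsert := card_insert_le n F
    have herase := card_erase_of_mem (mem_union_left W (mem_insert_self n F))
    have hAcard := (card_erase_le (a := n) (s := A)).trans (card_le_card hAW)
    exact .inr ⟨by omega, by omega⟩
  obtain ⟨v, hv, hvW⟩ := exists_mem_notMem_of_card_lt_card (t := Icc 1 n) (s := W)
    (by simp; omega)
  exact not_isInfectionSetM_of_isInfectionClosed hclosed subset_rfl hv hvW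

theorem Icc_mem_coneHypergraph_edges (hk : 1 ≤ k) (hkn : k ≤ n) :
    Icc (n - k + 1) n ∈ (coneHypergraph n k hn).edges := by
  have : Icc (n - k + 1) n = insert n (Icc (n - k + 1) (n - 1)) := by
    ext x; simp only [mem_Icc, mem_insert]; omega
  rw [this]
  exact insert_mem_coneHypergraph_edges hn (Icc_subset_Icc_left (by omega)) (by simp; omega)

theorem coneHypergraph_infectedFrom_of_mem_top_edge (hk : 1 ≤ k) (hkn : k ≤ n)
    {W : Finset ℕ} (hW : Icc 1 (n - k) ⊆ W) {a : ℕ} (ha : a ∈ Icc (n - k + 1) n)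
    (hainf : (coneHypergraph n k hn).InfectedFrom W a) {v : ℕ} (hv : v ∈ Icc 1 n) :
    (coneHypergraph n k hn).InfectedFrom W v := by
  have hlow :
      ∀ u ∈ Icc 1 n, u ∉ Icc (n - k + 1) n → (coneHypergraph n k hn).InfectedFrom W u :=
    fun u hu hu' => .init (hW (by simp at hu hu' ⊢; omega))
  by_cases hvtop : v ∈ Icc (n - k + 1) n
  · exact .of_mem_edge le_rfl (Icc_mem_coneHypergraph_edges hn hk hkn) ha hainf hlow hvtop
  · exact hlow v hv hvtop

theorem coneHypergraph_isInfectionSet_Icc_sub_add_one (hk : 1 ≤ k) (hkn : k ≤ n) :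
    (coneHypergraph n k hn).IsInfectionSet (Icc 1 (n - k + 1)) :=
  ⟨Icc_subset_Icc_right (by omega), fun _ hv =>
    coneHypergraph_infectedFrom_of_mem_top_edge hn hk hkn (Icc_subset_Icc_right (by omega))
      (mem_Icc.2 ⟨le_rfl, by omega⟩) (.init (by simp)) hv⟩

theorem coneHypergraph_isInfectionSet_Icc_sub (hk : 2 ≤ k) (h2k : 2 * k - 1 ≤ n) :
    (coneHypergraph n k hn).IsInfectionSet (Icc 1 (n - k)) := by
  have hbase : Icc 1 (k - 1) ⊆ Icc 1 (n - 1) := Icc_subset_Icc_right (by omega)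
  have hn_inf : (coneHypergraph n k hn).InfectedFrom (Icc 1 (n - k)) n := by
    refine .of_subset_unique_edge (A := Icc 1 (k - 1)) (by simp; omega) (subset_insert _ _)
      (insert_mem_coneHypergraph_edges hn hbase (by simp)) (fun a ha => .init ?_) ?_
      (mem_insert_self _ _)
    · simp at ha ⊢; omega
    rintro _ hE' hsub
    obtain ⟨F', hF', hF'card, rfl⟩ := (mem_coneHypergraph_edges hn).1 hE'
    have hn_notMem : n ∉ Icc 1 (k - 1) := by simp; omega
    have hsub' : Icc 1 (k - 1) ⊆ F' := erase_eq_of_notMem hn_notMem ▸ subset_insert_iff.1 hsub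
    rw [eq_of_subset_of_card_le hsub' (by simp; omega)]
  exact ⟨Icc_subset_Icc_right (by omega), fun _ hv =>
    coneHypergraph_infectedFrom_of_mem_top_edge hn (by omega) (by omega) subset_rfl
      (by simp; omega) hn_inf hv⟩

end coneHypergraph

/-- For `2 ≤ k ≤ n`, the hypergraph whose edges are all
`F ∪ {n}` with `F` a `(k-1)`-subset of `{1,…,n-1}` has infection number
`n - k` when `n ≥ 2k - 1`, and `n - k + 1` otherwise. -/
theorem infectionNumber_coneHypergraph (n k : ℕ) (hk : 2 ≤ k) (hkn : k ≤ n) :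
    (2 * k - 1 ≤ n →
      (coneHypergraph n k (by omega)).infectionNumber = n - k) ∧
    (n < 2 * k - 1 →
      (coneHypergraph n k (by omega)).infectionNumber = n - k + 1) := by
  have hn : 1 ≤ n := by omega
  refine ⟨fun h2k => ?_, fun h2k => ?_⟩
  · rw [infectionNumber, infectionNumberM_eq_card
      (coneHypergraph_isInfectionSet_Icc_sub hn hk h2k)
      fun W hW => coneHypergraph_not_isInfectionSetM_of_card_add_lt hn (by omega)
        (by simp at hW; omega)]
    simp
  · rw [infectionNumber, infectionNumberM_eq_card
      (coneHypergraph_isInfectionSet_Icc_sub_add_one hn (by omega) hkn)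
      fun W hW => coneHypergraph_not_isInfectionSetM_of_card_add_le hn le_rfl (by omega)
        (by simp at hW; omega)]
    simp
end

section
/- Let H be a hypergraph whose edges E_1, ..., E_p (p ≥ 1) form a flower: there is a nonempty set A such that E_i ∩ E_j = A for all distinct i, j, and E_i properly contains A for each i. Assume every vertex lies in some edge. Then I(H) = p − 1 (for p ≥ 2). -/
/-!
The private parts `E i \ A` of the petals are pairwise disjoint. If `W` misses the private parts of
two petals `i ≠ j`, no private vertex of either ever gets infected: a set infecting petal `i` would
have to lie in the core, and then any private vertex of `j` blocks it. Hence an infection set meets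
all private parts but one, so it has at least `p - 1` vertices. Conversely, one private vertex in
each petal but one infects all those petals (a private vertex lies in a single edge, so nothing
blocks it), hence the core, and the core then infects the last petal.
-/

namespace FinHypergraph

open Finset

variable {α : Type*} [DecidableEq α] {H : FinHypergraph α} {m : ℕ} {W : Finset α}

theorem infectionNumberM_eq_of_isLeast {n : ℕ}
    (h : IsLeast {n | ∃ W : Finset α, H.IsInfectionSetM m W ∧ W.card = n} n) :
    H.infectionNumberM m = n :=
  h.csInf_eq

theorem InfectedFromM.of_mem_unique_edge {x v : α} {e : Finset α} (hm : m ≤ 1)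
    (hx : H.InfectedFromM m W x) (he : e ∈ H.edges) (hxe : x ∈ e)
    (hunique : ∀ e' ∈ H.edges, x ∈ e' → e' = e) (hv : v ∈ e) :
    H.InfectedFromM m W v := by
  refine .spread (A := {x}) (by simpa using hm) (singleton_subset_iff.2 hxe) he
    (by simpa using hx) ?_ hv
  rintro u - hue ⟨e', he', hsub⟩
  have he'e : e' = e := hunique e' he' (hsub (by simp))
  exact absurd (he'e ▸ hsub (by simp)) hue

structure IsFlower {ι : Type*} (H : FinHypergraph α) (E : ι → Finset α) (A : Finset α) :
    Prop where
  mem_edges_iff : ∀ e, e ∈ H.edges ↔ ∃ i, E i = e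
  inter_eq : ∀ i j, i ≠ j → E i ∩ E j = A
  core_ssubset : ∀ i, A ⊂ E i

namespace IsFlower

variable {ι : Type*} {E : ι → Finset α} {A : Finset α} (hF : H.IsFlower E A)
include hF

theorem mem_edges (i : ι) : E i ∈ H.edges :=
  (hF.mem_edges_iff _).2 ⟨i, rfl⟩

theorem subset_verts (i : ι) : E i ⊆ H.verts :=
  H.edge_sub _ (hF.mem_edges i)

theorem eq_of_mem_of_notMem_core {v : α} {i j : ι} (hi : v ∈ E i) (hj : v ∈ E j)
    (hvA : v ∉ A) : i = j := by
  by_contra hij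
  exact hvA (hF.inter_eq i j hij ▸ mem_inter.2 ⟨hi, hj⟩)

theorem notMem_private_of_infected {M : Set ι} (hM : M.Nontrivial)
    (hWM : ∀ k ∈ M, Disjoint W (E k \ A)) {v : α} (hv : H.InfectedFromM m W v) :
    ∀ k ∈ M, v ∉ E k \ A := by
  induction hv with
  | init hvW => exact fun k hk hvk => disjoint_left.1 (hWM k hk) hvW hvk
  | @spread B e v _ hBe he _ _ hve ihB ihBlock =>
    intro k hk hvk
    obtain ⟨i, rfl⟩ := (hF.mem_edges_iff e).1 he
    obtain rfl : i = k := hF.eq_of_mem_of_notMem_core hve (mem_sdiff.1 hvk).1 (mem_sdiff.1 hvk).2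
    have hBA : B ⊆ A := fun b hb => by
      by_contra hbA
      exact ihB b hb i hk (mem_sdiff.2 ⟨hBe hb, hbA⟩)
    obtain ⟨j, hj, hji⟩ := hM.exists_ne i
    obtain ⟨u, hu, huA⟩ := exists_of_ssubset (hF.core_ssubset j)
    have hui : u ∉ E i := fun h => hji (hF.eq_of_mem_of_notMem_core hu h huA)
    have hBu : B ∪ {u} ⊆ E j :=
      union_subset (hBA.trans (hF.core_ssubset j).subset) (singleton_subset_iff.2 hu)
    exact ihBlock u (hF.subset_verts j hu) hui ⟨E j, hF.mem_edges j, hBu⟩ j hj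
      (mem_sdiff.2 ⟨hu, huA⟩)

theorem card_sub_one_le_card [Fintype ι] (hW : H.IsInfectionSetM m W) :
    Fintype.card ι - 1 ≤ W.card := by
  classical
  have hmissed : {k | Disjoint W (E k \ A)}.Subsingleton := by
    by_contra h
    rw [Set.not_subsingleton_iff] at h
    obtain ⟨k, hk⟩ := h.nonempty
    obtain ⟨x, hx, hxA⟩ := exists_of_ssubset (hF.core_ssubset k)
    exact hF.notMem_private_of_infected h (fun _ hk => hk) (hW.2 x (hF.subset_verts k hx)) k hk
      (mem_sdiff.2 ⟨hx, hxA⟩)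
  have hsplit := card_filter_add_card_filter_not (s := univ) fun k => Disjoint W (E k \ A)
  set T := univ.filter fun k => ¬Disjoint W (E k \ A)
  have hT : Fintype.card ι - 1 ≤ T.card := by
    have hle : (univ.filter fun k => Disjoint W (E k \ A)).card ≤ 1 :=
      card_le_one.2 fun a ha b hb => hmissed (by simpa using ha) (by simpa using hb)
    rw [card_univ] at hsplit
    omega
  refine hT.trans (card_le_card_of_forall_subsingleton (fun k x => x ∈ E k \ A) ?_ ?_)
  · intro k hk
    obtain ⟨x, hxW, hx⟩ := not_disjoint_iff.1 (mem_filter.1 hk).2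
    exact ⟨x, hxW, hx⟩
  · intro x _ i ⟨_, hi⟩ j ⟨_, hj⟩
    exact hF.eq_of_mem_of_notMem_core (mem_sdiff.1 hi).1 (mem_sdiff.1 hj).1 (mem_sdiff.1 hi).2

theorem infected_of_meets_private (hm : m ≤ 1) (hA : A.Nonempty)
    (hcover : ∀ v ∈ H.verts, ∃ e ∈ H.edges, v ∈ e) {i₀ i₁ : ι} (hi₁ : i₁ ≠ i₀)
    (hW : ∀ k ≠ i₀, ∃ x ∈ W, x ∈ E k \ A) :
    ∀ v ∈ H.verts, H.InfectedFromM m W v := by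
  have hpetal : ∀ k ≠ i₀, ∀ v ∈ E k, H.InfectedFromM m W v := by
    intro k hk v hv
    obtain ⟨x, hxW, hx⟩ := hW k hk
    obtain ⟨hxk, hxA⟩ := mem_sdiff.1 hx
    refine (InfectedFromM.init hxW).of_mem_unique_edge hm (hF.mem_edges k) hxk ?_ hv
    intro e he hxe
    obtain ⟨j, rfl⟩ := (hF.mem_edges_iff e).1 he
    rw [hF.eq_of_mem_of_notMem_core hxe hxk hxA]
  have hcore : ∀ a ∈ A, H.InfectedFromM m W a :=
    fun a ha => hpetal i₁ hi₁ a ((hF.core_ssubset i₁).subset ha)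
  intro v hv
  obtain ⟨e, he, hve⟩ := hcover v hv
  obtain ⟨k, rfl⟩ := (hF.mem_edges_iff e).1 he
  by_cases hk : k = i₀
  · subst hk
    refine .spread (hm.trans hA.card_pos) (hF.core_ssubset k).subset (hF.mem_edges k) hcore
      ?_ hve
    intro u hu huk _
    obtain ⟨e', he', hue'⟩ := hcover u hu
    obtain ⟨j, rfl⟩ := (hF.mem_edges_iff e').1 he'
    exact hpetal j (by rintro rfl; exact huk hue') u hue'
  · exact hpetal k hk v hve

theorem exists_isInfectionSetM_card_eq [Fintype ι] [Nontrivial ι] (hm : m ≤ 1)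
    (hA : A.Nonempty) (hcover : ∀ v ∈ H.verts, ∃ e ∈ H.edges, v ∈ e) :
    ∃ W, H.IsInfectionSetM m W ∧ W.card = Fintype.card ι - 1 := by
  classical
  choose w hwE hwA using fun k => exists_of_ssubset (hF.core_ssubset k)
  have hw_inj : Function.Injective w := fun i j h =>
    hF.eq_of_mem_of_notMem_core (hwE i) (h ▸ hwE j) (hwA i)
  obtain ⟨i₀⟩ := (inferInstance : Nonempty ι)
  obtain ⟨i₁, hi₁⟩ := exists_ne i₀
  refine ⟨(univ.erase i₀).image w, ⟨?_, hF.infected_of_meets_private hm hA hcover hi₁ ?_⟩, ?_⟩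
  · simpa [image_subset_iff] using fun k _ => hF.subset_verts k (hwE k)
  · exact fun k hk => ⟨w k, mem_image_of_mem w (by simpa using hk), mem_sdiff.2 ⟨hwE k, hwA k⟩⟩
  · rw [card_image_of_injective _ hw_inj, card_erase_of_mem (mem_univ _), card_univ]

end IsFlower

end FinHypergraph

theorem infectionNumber_flower_general
    {α : Type*} [DecidableEq α] (H : FinHypergraph α) (p : ℕ) (hp : 2 ≤ p)
    (E : Fin p → Finset α)
    (hedges : H.edges = Finset.univ.image E)
    (A : Finset α) (hA : A.Nonempty)
    (hcore : ∀ i j : Fin p, i ≠ j → E i ∩ E j = A)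
    (hpetal : ∀ i : Fin p, A ⊂ E i)
    (hcover : ∀ v ∈ H.verts, ∃ e ∈ H.edges, v ∈ e) :
    H.infectionNumber = p - 1 := by
  have hF : H.IsFlower E A := ⟨fun e => by simp [hedges], hcore, hpetal⟩
  have : Nontrivial (Fin p) := Fin.nontrivial_iff_two_le.2 hp
  obtain ⟨W, hW, hWcard⟩ := hF.exists_isInfectionSetM_card_eq le_rfl hA hcover
  rw [Fintype.card_fin] at hWcard
  refine FinHypergraph.infectionNumberM_eq_of_isLeast ⟨⟨W, hW, hWcard⟩, ?_⟩
  rintro _ ⟨W', hW', rfl⟩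
  simpa using hF.card_sub_one_le_card hW'

/-- A flower with `p ≥ 2` petals (edges pairwise intersecting in a
fixed nonempty core `A` properly contained in each petal, every vertex lying in
some edge) has infection number `p - 1`. -/
theorem infectionNumber_flower
    {α : Type*} [DecidableEq α] (H : FinHypergraph α) (p : ℕ) (hp : 2 ≤ p)
    (E : Fin p → Finset α) (hinj : Function.Injective E)
    (hedges : H.edges = Finset.univ.image E)
    (A : Finset α) (hA : A.Nonempty)
    (hcore : ∀ i j : Fin p, i ≠ j → E i ∩ E j = A)
    (hpetal : ∀ i : Fin p, A ⊂ E i)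
    (hcover : ∀ v ∈ H.verts, ∃ e ∈ H.edges, v ∈ e) :
    H.infectionNumber = p - 1 :=
  infectionNumber_flower_general H p hp E hedges A hA hcore hpetal hcover
end

section
/- If H is a reduced interval hypergraph (every edge is an interval with respect to some linear ordering of the vertices), then I(H) equals the number of connected components of H. -/
/-!
The components are a lower bound because infection only ever spreads along edges, so every
component must contain an initially infected vertex. Conversely, infecting the vertex of least
position in each component suffices, by induction along the order: a vertex `u` that is not the
least of its component lies in an edge that also contains an earlier vertex `a`. Let `r` be the
rightmost vertex of all edges through `a` and `u`, take such an edge `E ∋ r`, and let the vertices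
of `E` left of `u` infect `E`. An uninfected vertex `w ∉ E` sharing an edge with them would lie
right of `u`; that edge, being an interval, would then contain `u`, so `w` would lie between `a`
and `r` and hence in `E`.
-/

namespace FinHypergraph

variable {α : Type*} [DecidableEq α] (H : FinHypergraph α)

def IsIntervalOrder {β : Type*} [LinearOrder β] (f : α → β) : Prop :=
  ∀ e ∈ H.edges, ∀ u ∈ e, ∀ w ∈ e, ∀ v ∈ H.verts, f u ≤ f v → f v ≤ f w → v ∈ e

noncomputable def componentMinima (f : α → ℕ) : Finset α :=
  H.verts.filter fun u => ∀ x ∈ H.component u, f u ≤ f x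

instance : Std.Symm H.Adj where
  symm _ _ := fun ⟨e, he, hu, hv⟩ => ⟨e, he, hv, hu⟩

theorem reflTransGen_adj_symm {u v : α} (h : Relation.ReflTransGen H.Adj u v) :
    Relation.ReflTransGen H.Adj v u :=
  Std.Symm.symm _ _ h

theorem mem_component_iff {u x : α} :
    x ∈ H.component u ↔ x ∈ H.verts ∧ Relation.ReflTransGen H.Adj u x := by
  classical
  simp [component]

theorem mem_component_self {v : α} (hv : v ∈ H.verts) : v ∈ H.component v :=
  H.mem_component_iff.mpr ⟨hv, .refl⟩

theorem component_eq_of_reflTransGen {u v : α} (h : Relation.ReflTransGen H.Adj u v) :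
    H.component u = H.component v := by
  ext x
  simp only [mem_component_iff]
  exact and_congr_right fun _ => ⟨(H.reflTransGen_adj_symm h).trans, h.trans⟩

theorem InfectedFromM.exists_reflTransGen {m : ℕ} (hm : 0 < m) {W : Finset α} {v : α}
    (h : InfectedFromM H m W v) : ∃ w ∈ W, Relation.ReflTransGen H.Adj w v := by
  induction h with
  | init hv => exact ⟨_, hv, .refl⟩
  | spread hcard hAE hE _ _ hv ih =>
    obtain ⟨a, ha⟩ := Finset.card_pos.mp (hm.trans_le hcard)
    obtain ⟨w, hw, hwa⟩ := ih a ha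
    exact ⟨w, hw, hwa.tail ⟨_, hE, hAE ha, hv⟩⟩

theorem card_components_le_card_of_isInfectionSetM {m : ℕ} (hm : 0 < m) {W : Finset α}
    (hW : H.IsInfectionSetM m W) : (H.verts.image H.component).card ≤ W.card := by
  have hsub : H.verts.image H.component ⊆ W.image H.component := by
    intro C hC
    obtain ⟨v, hv, rfl⟩ := Finset.mem_image.mp hC
    obtain ⟨w, hwW, hwv⟩ := InfectedFromM.exists_reflTransGen H hm (hW.2 v hv)
    exact Finset.mem_image.mpr ⟨w, hwW, H.component_eq_of_reflTransGen hwv⟩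
  exact (Finset.card_le_card hsub).trans Finset.card_image_le

theorem exists_edge_crossing {β : Type*} [LinearOrder β] (f : α → β) {x u : α} {t : β}
    (hxu : Relation.ReflTransGen H.Adj x u) (hx : f x < t) (hu : t ≤ f u) :
    ∃ e ∈ H.edges, ∃ a ∈ e, ∃ c ∈ e, f a < t ∧ t ≤ f c := by
  induction hxu with
  | refl => exact absurd (hx.trans_le hu) (lt_irrefl _)
  | @tail b c _ hbc ih =>
    obtain hb | hb := lt_or_ge (f b) t
    · obtain ⟨e, he, hbe, hce⟩ := hbc
      exact ⟨e, he, b, hbe, c, hce, hb, hu⟩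
    · exact ih hb

theorem infectionNumberM_eq {m k : ℕ} {W : Finset α} (hW : H.IsInfectionSetM m W)
    (hWk : W.card ≤ k) (hk : ∀ W', H.IsInfectionSetM m W' → k ≤ W'.card) :
    H.infectionNumberM m = k := by
  rw [infectionNumberM]
  refine le_antisymm (le_trans (Nat.sInf_le ?_) hWk) (le_csInf ⟨W.card, W, hW, rfl⟩ ?_)
  · exact ⟨W, hW, rfl⟩
  · rintro _ ⟨W', hW', rfl⟩
    exact hk W' hW'

theorem card_componentMinima_le {f : α → ℕ} (hf : Set.InjOn f H.verts) :
    (H.componentMinima f).card ≤ (H.verts.image H.component).card := by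
  refine Finset.card_le_card_of_injOn H.component
    (fun u hu => Finset.mem_image_of_mem _ (Finset.mem_filter.mp hu).1) ?_
  intro u hu v hv hcomp
  obtain ⟨hu, humin⟩ := Finset.mem_filter.mp hu
  obtain ⟨hv, hvmin⟩ := Finset.mem_filter.mp hv
  have hvu : v ∈ H.component u := hcomp ▸ H.mem_component_self hv
  have huv : u ∈ H.component v := hcomp ▸ H.mem_component_self hu
  exact hf hu hv (le_antisymm (humin v hvu) (hvmin u huv))

variable {H} {β : Type*} [LinearOrder β] {f : α → β}

theorem IsIntervalOrder.exists_edge_of_lt (hf : H.IsIntervalOrder f) {u x : α}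
    (hu : u ∈ H.verts) (hx : x ∈ H.component u) (hxu : f x < f u) :
    ∃ e ∈ H.edges, u ∈ e ∧ ∃ a ∈ e, f a < f u := by
  have hux := (H.mem_component_iff.mp hx).2
  obtain ⟨e, he, a, ha, c, hc, hau, huc⟩ :=
    H.exists_edge_crossing f (H.reflTransGen_adj_symm hux) hxu le_rfl
  exact ⟨e, he, hf e he a ha c hc u hu hau.le huc, a, ha, hau⟩

theorem IsIntervalOrder.lt_of_notMem (hf : H.IsIntervalOrder f) {e e' : Finset α}
    (he : e ∈ H.edges) (he' : e' ∈ H.edges) {a r u w : α} (hu : u ∈ H.verts)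
    (hw : w ∈ H.verts) (hae : a ∈ e) (hre : r ∈ e) (hae' : a ∈ e') (hwe' : w ∈ e') (hwe : w ∉ e)
    (hau : f a < f u)
    (hr : ∀ e'' ∈ H.edges, a ∈ e'' → u ∈ e'' → ∀ y ∈ e'', f y ≤ f r) :
    f w < f u := by
  by_contra! huw
  have hue' : u ∈ e' := hf e' he' a hae' w hwe' u hu hau.le huw
  exact hwe (hf e he a hae r hre w hw (hau.le.trans huw) (hr e' he' hae' hue' w hwe'))

theorem IsIntervalOrder.infectedFromM_of_lt (hf : H.IsIntervalOrder f) {W : Finset α}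
    {u x : α} (hu : u ∈ H.verts) (hx : x ∈ H.component u) (hxu : f x < f u)
    (hlt : ∀ v ∈ H.verts, f v < f u → InfectedFromM H 1 W v) : InfectedFromM H 1 W u := by
  classical
  obtain ⟨e₀, he₀, hue₀, a, hae₀, hau⟩ := hf.exists_edge_of_lt hu hx hxu
  let R := H.verts.filter fun r => ∃ e ∈ H.edges, a ∈ e ∧ u ∈ e ∧ r ∈ e
  obtain ⟨r, hrR, hrmax⟩ :=
    R.exists_max_image f ⟨u, Finset.mem_filter.mpr ⟨hu, e₀, he₀, hae₀, hue₀, hue₀⟩⟩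
  obtain ⟨e, he, hae, hue, hre⟩ := (Finset.mem_filter.mp hrR).2
  have hr : ∀ e'' ∈ H.edges, a ∈ e'' → u ∈ e'' → ∀ y ∈ e'', f y ≤ f r :=
    fun e'' he'' hae'' hue'' y hy =>
      hrmax y (Finset.mem_filter.mpr ⟨H.edge_sub e'' he'' hy, e'', he'', hae'', hue'', hy⟩)
  let A := e.filter fun b => f b < f u
  have haA : a ∈ A := Finset.mem_filter.mpr ⟨hae, hau⟩
  refine .spread (A := A) (Finset.card_pos.mpr ⟨a, haA⟩) (Finset.filter_subset _ _) he
    (fun b hb => hlt b (H.edge_sub e he (Finset.mem_filter.mp hb).1) (Finset.mem_filter.mp hb).2)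
    ?_ hue
  rintro w hw hwe ⟨e', he', hAw⟩
  have hae' : a ∈ e' := hAw (Finset.mem_union_left _ haA)
  have hwe' : w ∈ e' := hAw (Finset.mem_union_right _ (Finset.mem_singleton_self w))
  exact hlt w hw (hf.lt_of_notMem he he' hu hw hae hre hae' hwe' hwe hau hr)

theorem IsIntervalOrder.isInfectionSetM_componentMinima {f : α → ℕ}
    (hf : H.IsIntervalOrder f) : H.IsInfectionSetM 1 (H.componentMinima f) := by
  refine ⟨Finset.filter_subset _ _, fun v hv => ?_⟩
  induction h : f v using Nat.strong_induction_on generalizing v with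
  | _ n ih =>
    by_cases hmin : ∀ x ∈ H.component v, f v ≤ f x
    · exact .init (Finset.mem_filter.mpr ⟨hv, hmin⟩)
    push Not at hmin
    obtain ⟨x, hx, hxv⟩ := hmin
    exact hf.infectedFromM_of_lt hv hx hxv fun w hw hwv => ih _ (h ▸ hwv) w hw rfl

end FinHypergraph

theorem infectionNumber_interval_eq_card_components_general
    {α : Type*} [DecidableEq α] (H : FinHypergraph α)
    (f : α → ℕ) (hfinj : Set.InjOn f H.verts)
    (hint : ∀ e ∈ H.edges, ∀ u ∈ e, ∀ w ∈ e, ∀ v ∈ H.verts,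
      f u ≤ f v → f v ≤ f w → v ∈ e) :
    H.infectionNumber = (H.verts.image H.component).card :=
  H.infectionNumberM_eq (FinHypergraph.IsIntervalOrder.isInfectionSetM_componentMinima hint)
    (H.card_componentMinima_le hfinj)
    fun _ hW => H.card_components_le_card_of_isInfectionSetM one_pos hW

/-- The infection number of a reduced interval hypergraph equals
its number of connected components. -/
theorem infectionNumber_interval_eq_card_components
    {α : Type*} [DecidableEq α] (H : FinHypergraph α)
    (hred : H.Reduced)
    (f : α → ℕ) (hfinj : Set.InjOn f H.verts)
    (hint : ∀ e ∈ H.edges, ∀ u ∈ e, ∀ w ∈ e, ∀ v ∈ H.verts,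
      f u ≤ f v → f v ≤ f w → v ∈ e) :
    H.infectionNumber = (H.verts.image H.component).card :=
  infectionNumber_interval_eq_card_components_general H f hfinj hint
end

section
/- Let H be a hypergraph whose edge set forms a symmetric 2-(k²−k+1, k, 1) design with k ≥ 3 (so every pair of vertices lies in exactly one edge, every edge has size k, and n = k²−k+1). Then I(H) = 3. -/
/-!
A symmetric `2-(k²-k+1, k, 1)` design is a projective plane: any two lines meet, and the
complement of a line, with `(k-1)² > k` points, fits in no line. In a linear space two
infected points infect exactly their line, while a single infected point `x` can infect a
line `E` only once all of `V \ E` (every vertex is adjacent to `x`) is infected. Hence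
infection started from two points never leaves their line. Conversely two points of a
line `L` infect `L`, and a third point `c ∉ L` then infects every line through `c`, since
each of them meets `L`.
-/

namespace FinHypergraph

open Finset

variable {α : Type*} [DecidableEq α] {H : FinHypergraph α}

variable (H) in
def IsLinear : Prop :=
  ∀ u ∈ H.verts, ∀ v ∈ H.verts, u ≠ v → #(H.edges.filter (fun e => u ∈ e ∧ v ∈ e)) = 1

namespace IsLinear

theorem exists_edge (hH : H.IsLinear) {u v : α} (hu : u ∈ H.verts) (hv : v ∈ H.verts)
    (huv : u ≠ v) : ∃ e ∈ H.edges, u ∈ e ∧ v ∈ e := by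
  obtain ⟨e, he⟩ := card_eq_one.mp (hH u hu v hv huv)
  have hmem : e ∈ H.edges.filter (fun e => u ∈ e ∧ v ∈ e) := he ▸ mem_singleton_self e
  exact ⟨e, mem_filter.mp hmem⟩

theorem eq_of_mem (hH : H.IsLinear) {u v : α} (huv : u ≠ v) {e f : Finset α}
    (he : e ∈ H.edges) (hue : u ∈ e) (hve : v ∈ e)
    (hf : f ∈ H.edges) (huf : u ∈ f) (hvf : v ∈ f) : e = f :=
  card_le_one.mp (hH u (H.edge_sub e he hue) v (H.edge_sub e he hve) huv).le e
    (mem_filter.mpr ⟨he, hue, hve⟩) f (mem_filter.mpr ⟨hf, huf, hvf⟩)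

theorem exists_edge_superset (hH : H.IsLinear) (hV : 2 ≤ #H.verts) {W : Finset α}
    (hWV : W ⊆ H.verts) (hW : #W ≤ 2) : ∃ L ∈ H.edges, W ⊆ L := by
  obtain ⟨W', hWW', hW'V, hW'⟩ := exists_subsuperset_card_eq hWV hW hV
  obtain ⟨a, b, hab, rfl⟩ := card_eq_two.mp hW'
  obtain ⟨L, hL, haL, hbL⟩ := hH.exists_edge (hW'V (by simp)) (hW'V (by simp)) hab
  exact ⟨L, hL, hWW'.trans (by simp [insert_subset_iff, haL, hbL])⟩

/-- The `k` lines joining `c` to the points of `L` meet only in `c`, so they already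
cover `k(k-1) + 1` points. -/
theorem exists_edge_through_of_card_le (hH : H.IsLinear) {k : ℕ}
    (hsize : ∀ e ∈ H.edges, #e = k) (hV : #H.verts ≤ k * (k - 1) + 1)
    {L : Finset α} {c v : α} (hL : L ∈ H.edges) (hc : c ∈ H.verts) (hcL : c ∉ L)
    (hv : v ∈ H.verts) (hvc : v ≠ c) :
    ∃ p ∈ L, ∃ M ∈ H.edges, c ∈ M ∧ p ∈ M ∧ v ∈ M := by
  by_contra! hmiss
  have hline : ∀ p, ∃ M, p ∈ L → M ∈ H.edges ∧ c ∈ M ∧ p ∈ M := fun p => by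
    by_cases hp : p ∈ L
    · obtain ⟨M, hM⟩ := hH.exists_edge hc (H.edge_sub L hL hp) (by rintro rfl; exact hcL hp)
      exact ⟨M, fun _ => hM⟩
    · exact ⟨∅, fun h => absurd h hp⟩
  choose line hline using hline
  have hdisj : (L : Set α).PairwiseDisjoint fun p => (line p).erase c := by
    intro p hp q hq hpq
    refine disjoint_left.mpr fun z hzp hzq => ?_
    obtain ⟨hMp, hcp, hpp⟩ := hline p hp
    obtain ⟨hMq, hcq, hqq⟩ := hline q hq
    have hpq_line : line p = line q := hH.eq_of_mem (ne_of_mem_erase hzp).symm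
      hMp hcp (mem_of_mem_erase hzp) hMq hcq (mem_of_mem_erase hzq)
    exact hcL (hH.eq_of_mem hpq hMp hpp (hpq_line ▸ hqq) hL hp hq ▸ hcp)
  have hsub : insert c (insert v (L.biUnion fun p => (line p).erase c)) ⊆ H.verts := by
    simp only [insert_subset_iff, biUnion_subset]
    exact ⟨hc, hv, fun p hp => (erase_subset c _).trans (H.edge_sub _ (hline p hp).1)⟩
  have hvU : v ∉ L.biUnion fun p => (line p).erase c := by
    simp only [mem_biUnion, not_exists, not_and]
    exact fun p hp hvp =>
      hmiss p hp _ (hline p hp).1 (hline p hp).2.1 (hline p hp).2.2 (mem_of_mem_erase hvp)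
  have hcU : c ∉ insert v (L.biUnion fun p => (line p).erase c) := by
    simp [hvc.symm]
  have hcard := card_le_card hsub
  rw [card_insert_of_notMem hcU, card_insert_of_notMem hvU, card_biUnion hdisj,
    sum_congr rfl fun p hp => by
      rw [card_erase_of_mem (hline p hp).2.1, hsize _ (hline p hp).1],
    sum_const, smul_eq_mul, hsize L hL] at hcard
  omega

theorem inter_nonempty_of_card_le (hH : H.IsLinear) {k : ℕ} (hk : 2 ≤ k)
    (hsize : ∀ e ∈ H.edges, #e = k) (hV : #H.verts ≤ k * (k - 1) + 1)
    {e f : Finset α} (he : e ∈ H.edges) (hf : f ∈ H.edges) : (e ∩ f).Nonempty := by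
  obtain ⟨c, hcf, d, hdf, hcd⟩ := one_lt_card.mp (hsize f hf ▸ hk)
  by_cases hce : c ∈ e
  · exact ⟨c, mem_inter.mpr ⟨hce, hcf⟩⟩
  obtain ⟨p, hpe, M, hM, hcM, hpM, hdM⟩ := hH.exists_edge_through_of_card_le hsize hV he
    (H.edge_sub f hf hcf) hce (H.edge_sub f hf hdf) hcd.symm
  exact ⟨p, mem_inter.mpr ⟨hpe, hH.eq_of_mem hcd hM hcM hdM hf hcf hdf ▸ hpM⟩⟩

theorem infectedFrom_of_mem_edge (hH : H.IsLinear) {W E : Finset α} {x y v : α}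
    (hE : E ∈ H.edges) (hx : x ∈ E) (hy : y ∈ E) (hxy : x ≠ y)
    (hxW : H.InfectedFrom W x) (hyW : H.InfectedFrom W y) (hv : v ∈ E) :
    H.InfectedFrom W v := by
  refine InfectedFromM.spread (A := {x, y}) (by simp [card_pair hxy])
    (by simp [insert_subset_iff, hx, hy]) hE ?_ ?_ hv
  · simp only [mem_insert, mem_singleton]
    rintro a (rfl | rfl) <;> assumption
  · rintro u - huE ⟨E', hE', hxyu⟩
    have hE'E := hH.eq_of_mem hxy hE' (hxyu (by simp)) (hxyu (by simp)) hE hx hy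
    exact absurd (hE'E ▸ hxyu (by simp)) huE

theorem mem_of_infectedFrom (hH : H.IsLinear) {L W : Finset α} {v : α} (hL : L ∈ H.edges)
    (hWL : W ⊆ L) (hcompl : ∀ E ∈ H.edges, ¬ H.verts \ E ⊆ L) (hv : H.InfectedFrom W v) :
    v ∈ L := by
  induction hv with
  | init hv => exact hWL hv
  | @spread A E v hcard hAE hE _ _ hvE ihA ihB =>
    obtain ⟨x, hxA⟩ := card_pos.mp hcard
    by_cases hA : ∃ y ∈ A, y ≠ x
    · obtain ⟨y, hyA, hyx⟩ := hA
      rwa [hH.eq_of_mem hyx.symm hE (hAE hxA) (hAE hyA) hL (ihA x hxA) (ihA y hyA)] at hvE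
    · push Not at hA
      refine absurd (fun u hu => ?_) (hcompl E hE)
      obtain ⟨huV, huE⟩ := mem_sdiff.mp hu
      have hxE := hAE hxA
      obtain ⟨e, he, hxe, hue⟩ :=
        hH.exists_edge (H.edge_sub E hE hxE) huV (by rintro rfl; exact huE hxE)
      refine ihB u huV huE ⟨e, he, fun z hz => ?_⟩
      rcases mem_union.mp hz with hz | hz
      · exact hA z hz ▸ hxe
      · exact mem_singleton.mp hz ▸ hue

theorem three_le_card_of_isInfectionSet (hH : H.IsLinear) (hV : 2 ≤ #H.verts)
    (hcompl : ∀ E ∈ H.edges, ∀ L ∈ H.edges, ¬ H.verts \ E ⊆ L) {W : Finset α}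
    (hW : H.IsInfectionSet W) : 3 ≤ #W := by
  by_contra! hW3
  obtain ⟨L, hL, hWL⟩ := hH.exists_edge_superset hV hW.1 (by omega)
  exact hcompl L hL L hL fun v hv =>
    hH.mem_of_infectedFrom hL hWL (fun E hE => hcompl E hE L hL) (hW.2 v (mem_sdiff.mp hv).1)

theorem isInfectionSet_of_inter_nonempty (hH : H.IsLinear)
    (hmeet : ∀ e ∈ H.edges, ∀ f ∈ H.edges, (e ∩ f).Nonempty)
    {L : Finset α} {a b c : α} (hL : L ∈ H.edges) (ha : a ∈ L) (hb : b ∈ L) (hab : a ≠ b)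
    (hc : c ∈ H.verts) (hcL : c ∉ L) : H.IsInfectionSet {a, b, c} := by
  have hLinf : ∀ p ∈ L, H.InfectedFrom {a, b, c} p := fun p hp =>
    hH.infectedFrom_of_mem_edge hL ha hb hab (InfectedFromM.init (by simp))
      (InfectedFromM.init (by simp)) hp
  refine ⟨by simp [insert_subset_iff, H.edge_sub L hL ha, H.edge_sub L hL hb, hc],
    fun v hv => ?_⟩
  obtain rfl | hvc := eq_or_ne v c
  · exact InfectedFromM.init (by simp)
  obtain ⟨M, hM, hcM, hvM⟩ := hH.exists_edge hc hv hvc.symm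
  obtain ⟨p, hp⟩ := hmeet M hM L hL
  obtain ⟨hpM, hpL⟩ := mem_inter.mp hp
  exact hH.infectedFrom_of_mem_edge hM hcM hpM (by rintro rfl; exact hcL hpL)
    (InfectedFromM.init (by simp)) (hLinf p hpL) hvM

theorem infectionNumber_eq_three (hH : H.IsLinear) (hV : 2 ≤ #H.verts)
    (hmeet : ∀ e ∈ H.edges, ∀ f ∈ H.edges, (e ∩ f).Nonempty)
    (hcompl : ∀ E ∈ H.edges, ∀ L ∈ H.edges, ¬ H.verts \ E ⊆ L) :
    H.infectionNumber = 3 := by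
  obtain ⟨a, ha, b, hb, hab⟩ := one_lt_card.mp hV
  obtain ⟨L, hL, haL, hbL⟩ := hH.exists_edge ha hb hab
  obtain ⟨c, hc, hcL⟩ := not_subset.mp fun h => hcompl L hL L hL (sdiff_subset.trans h)
  have h3 : 3 ∈ {n | ∃ W, H.IsInfectionSetM 1 W ∧ #W = n} :=
    ⟨{a, b, c}, hH.isInfectionSet_of_inter_nonempty hmeet hL haL hbL hab hc hcL,
      card_eq_three.mpr ⟨a, b, c, hab, by rintro rfl; exact hcL haL,
        by rintro rfl; exact hcL hbL, rfl⟩⟩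
  refine le_antisymm (Nat.sInf_le h3) (le_csInf ⟨3, h3⟩ ?_)
  rintro n ⟨W, hW, rfl⟩
  exact hH.three_le_card_of_isInfectionSet hV hcompl hW

end IsLinear

end FinHypergraph

/-- If the edges of `H` form a symmetric `2-(k²-k+1, k, 1)`
design with `k ≥ 3`, then `I(H) = 3`. -/
theorem infectionNumber_symmetric_design
    {α : Type*} [DecidableEq α] (H : FinHypergraph α) (k : ℕ) (hk : 3 ≤ k)
    (hV : H.verts.card = k ^ 2 - k + 1)
    (hsize : ∀ e ∈ H.edges, e.card = k)
    (hpair : ∀ u ∈ H.verts, ∀ v ∈ H.verts, u ≠ v →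
      (H.edges.filter (fun e => u ∈ e ∧ v ∈ e)).card = 1) :
    H.infectionNumber = 3 := by
  have hlin : H.IsLinear := hpair
  have hVk : H.verts.card = k * (k - 1) + 1 := by rw [hV, sq, Nat.mul_sub_one]
  have hk3 : 3 * (k - 1) ≤ k * (k - 1) := Nat.mul_le_mul_right _ hk
  refine hlin.infectionNumber_eq_three (by omega)
    (fun e he f hf => hlin.inter_nonempty_of_card_le (by omega) hsize hVk.le he hf)
    fun E hE L hL hsub => ?_
  have hcard := Finset.card_le_card hsub
  rw [Finset.card_sdiff_of_subset (H.edge_sub E hE), hsize E hE, hsize L hL, hVk] at hcard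
  omega
end

section
/- Let H be a hypergraph whose edges form a t-(n,k,1) design, and let W be any set of vertices with derived set I_W (the set of all vertices infected by repeatedly applying the infection rule starting from W). Then the sub-hypergraph of H induced by I_W is either trivial (has no edges) or its edges form a t-(|I_W|, k, 1) design. -/
open Classical in
/-- The derived set of `W`: all vertices infected by repeatedly applying the
infection rule starting from `W`. -/
noncomputable def FinHypergraph.derivedSet {α : Type*} [DecidableEq α]
    (H : FinHypergraph α) (W : Finset α) : Finset α :=
  H.verts.filter (fun v => H.InfectedFrom W v)

/-!
Fix a `t`-subset `S` of `I_W` and let `E` be the unique block through `S`. If `t > 0`, the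
infected set `S` can infect `E`: any edge containing `S ∪ {u}` contains `S`, hence is `E`, so no
vertex outside `E` blocks the infection. If `t = 0`, `E` is the only block at all, and it lies in
`I_W` as soon as the induced hypergraph has an edge. Either way `E ⊆ I_W`, so `E` is also the
unique block through `S` in the induced hypergraph.
-/

namespace FinHypergraph

variable {α : Type*} [DecidableEq α] {H : FinHypergraph α}

theorem mem_derivedSet {W : Finset α} {v : α} :
    v ∈ H.derivedSet W ↔ v ∈ H.verts ∧ H.InfectedFrom W v := by
  classical
  exact Finset.mem_filter

theorem derivedSet_subset_verts (W : Finset α) : H.derivedSet W ⊆ H.verts :=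
  fun _ hv => (mem_derivedSet.mp hv).1

theorem mem_restrict_edges {X e : Finset α} :
    e ∈ (H.restrict X).edges ↔ e ∈ H.edges ∧ e ⊆ X :=
  Finset.mem_filter

theorem restrict_edges_filter_superset (X S : Finset α) :
    (H.restrict X).edges.filter (fun e => S ⊆ e) =
      (H.edges.filter (fun e => S ⊆ e)).filter (fun e => e ⊆ X) := by
  ext e
  simp only [Finset.mem_filter, mem_restrict_edges]
  tauto

theorem InfectedFrom.of_unique_edge {W A E : Finset α} (hA : A.Nonempty)
    (hAinf : ∀ a ∈ A, H.InfectedFrom W a) (hE : H.edges.filter (fun e => A ⊆ e) = {E})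
    {v : α} (hv : v ∈ E) : H.InfectedFrom W v := by
  have hmem : ∀ {e}, e ∈ H.edges → A ⊆ e → e = E := fun he hAe =>
    Finset.mem_singleton.mp (hE ▸ Finset.mem_filter.mpr ⟨he, hAe⟩)
  obtain ⟨hEedge, hAE⟩ := Finset.mem_filter.mp (hE ▸ Finset.mem_singleton_self E)
  refine InfectedFromM.spread (Finset.one_le_card.mpr hA) hAE hEedge hAinf ?_ hv
  rintro u - huE ⟨E', hE', hAuE'⟩
  have hE'E := hmem hE' (Finset.union_subset_left hAuE')
  exact absurd (hE'E ▸ hAuE' (Finset.mem_union_right A (Finset.mem_singleton_self u))) huE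

theorem edge_subset_derivedSet_of_unique {W A E : Finset α} (hA : A.Nonempty)
    (hAW : A ⊆ H.derivedSet W) (hE : H.edges.filter (fun e => A ⊆ e) = {E}) :
    E ⊆ H.derivedSet W := by
  have hEedge : E ∈ H.edges := (Finset.mem_filter.mp (hE ▸ Finset.mem_singleton_self E)).1
  intro v hv
  exact mem_derivedSet.mpr ⟨H.edge_sub E hEedge hv,
    InfectedFrom.of_unique_edge hA (fun a ha => (mem_derivedSet.mp (hAW ha)).2) hE hv⟩

end FinHypergraph

theorem induced_derivedSet_design_general
    {α : Type*} [DecidableEq α] (H : FinHypergraph α) (t : ℕ)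
    (hdes : ∀ S ⊆ H.verts, S.card = t →
      (H.edges.filter (fun e => S ⊆ e)).card = 1)
    (W : Finset α) :
    (H.restrict (H.derivedSet W)).edges = ∅ ∨
      ∀ S ⊆ H.derivedSet W, S.card = t →
        ((H.restrict (H.derivedSet W)).edges.filter (fun e => S ⊆ e)).card = 1 := by
  rw [or_iff_not_imp_left]
  intro hne S hS hScard
  obtain ⟨E, hE⟩ :=
    Finset.card_eq_one.mp (hdes S (hS.trans (H.derivedSet_subset_verts W)) hScard)
  have hEI : E ⊆ H.derivedSet W := by
    rcases S.eq_empty_or_nonempty with rfl | hSne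
    · obtain ⟨e, he⟩ := Finset.nonempty_iff_ne_empty.mpr hne
      obtain ⟨he, heI⟩ := FinHypergraph.mem_restrict_edges.mp he
      have heE : e = E :=
        Finset.mem_singleton.mp (hE ▸ Finset.mem_filter.mpr ⟨he, Finset.empty_subset e⟩)
      exact heE ▸ heI
    · exact FinHypergraph.edge_subset_derivedSet_of_unique hSne hS hE
  rw [FinHypergraph.restrict_edges_filter_superset, hE, Finset.filter_singleton, if_pos hEI,
    Finset.card_singleton]

/-- If the edges of `H` form a `t-(n,k,1)` design, then for any
vertex set `W`, the sub-hypergraph induced by the derived set `I_W` either has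
no edges or its edges form a `t-(|I_W|, k, 1)` design. -/
theorem induced_derivedSet_design
    {α : Type*} [DecidableEq α] (H : FinHypergraph α) (t n k : ℕ)
    (hV : H.verts.card = n)
    (hsize : ∀ e ∈ H.edges, e.card = k)
    (hdes : ∀ S ⊆ H.verts, S.card = t →
      (H.edges.filter (fun e => S ⊆ e)).card = 1)
    (W : Finset α) (hW : W ⊆ H.verts) :
    (H.restrict (H.derivedSet W)).edges = ∅ ∨
      ∀ S ⊆ H.derivedSet W, S.card = t →
        ((H.restrict (H.derivedSet W)).edges.filter (fun e => S ⊆ e)).card = 1 :=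
  induced_derivedSet_design_general H t hdes W
end
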